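/- For every c₀ ≥ 1 there exists a constant C > 0 (depending only on c₀) with the following property. Let τ ∈ ℝ, ξ > 0, q ∈ ℤ, K₁, K₂ ≥ 1, M₁, M₂ ≥ 1, and let I₁, I₂ be intervals. Let B^{2,1} be the set of (ξ₁, q₁) ∈ ℝ×ℤ such that ξ₁ ∈ I₁, ξ − ξ₁ ∈ I₂, M₁ ≤ ξ₁ ≤ 2M₁, M₂ ≤ ξ − ξ₁ ≤ 2M₂, ⟨τ − ξ³ + q²/ξ + 3 ξ ξ₁ (ξ − ξ₁) + (ξ q₁ − ξ₁ q)²/(ξ ξ₁ (ξ − ξ₁))⟩ ≤ c₀ (K₁∨K₂), and 1 ≤ |q₁/ξ₁ − (q − q₁)/(ξ − ξ₁)| < (K₁∨K₂)^{1/2} / (M₁∧M₂)^{1/2}. Then μ(B^{2,1}) ≤ C · (K₁∨K₂) · (M₁∧M₂)^{1/2} / (M₁∨M₂)^{1/2}. -/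

import Mathlib

/-!
Put `v = q₁/ξ₁ - (q - q₁)/(ξ - ξ₁)` and `w = ξ₁(ξ - ξ₁)/ξ ≤ min ξ₁ (ξ - ξ₁) ≤ 2 (M₁ ∧ M₂)`.
Then `ξ q₁ - ξ₁ q = ξ w v`, so the last term inside the bracket is `w v² ≤ 2K`, and the bracket
bound confines the quadratic `3ξ ξ₁ (ξ - ξ₁)` in `ξ₁`, whose leading coefficient is
`3ξ ≥ 3 (M₁ ∨ M₂)`, to a window of width `O(K)`; these `ξ₁` form a set of measure
`O((K / (M₁ ∨ M₂))^{1/2})`. For each such `ξ₁`, the integer `q₁` lies within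
`w |v| ≤ 2 (K (M₁ ∧ M₂))^{1/2}` of `ξ₁ q / ξ`.
-/

open MeasureTheory

/-- Japanese bracket `⟨x⟩ = (1+x²)^{1/2}`. -/
noncomputable def jb (x : ℝ) : ℝ := Real.sqrt (1 + x ^ 2)

open Set
open scoped ENNReal

lemma abs_le_jb (y : ℝ) : |y| ≤ jb y := by
  rw [jb, ← Real.sqrt_sq_eq_abs]
  exact Real.sqrt_le_sqrt (by linarith)

lemma Real.sqrt_sub_sqrt_le_sqrt_sub (a b : ℝ) : √b - √a ≤ √(b - a) := by
  rcases le_total a 0 with ha | ha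
  · rw [Real.sqrt_eq_zero'.mpr ha, sub_zero]
    exact Real.sqrt_le_sqrt (by linarith)
  rcases le_total b a with hba | hab
  · linarith [Real.sqrt_le_sqrt hba, Real.sqrt_nonneg (b - a)]
  · nlinarith [Real.sq_sqrt ha, Real.sq_sqrt (sub_nonneg.mpr hab), Real.sqrt_nonneg a,
      Real.sqrt_nonneg (b - a), Real.sq_sqrt (ha.trans hab), Real.sqrt_nonneg b]

lemma Real.volume_setOf_abs_sub_mem_Icc_le (t a b : ℝ) :
    volume {x : ℝ | |x - t| ∈ Icc a b} ≤ 2 * ENNReal.ofReal (b - a) := by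
  have hsub : {x : ℝ | |x - t| ∈ Icc a b} ⊆ Icc (t - b) (t - a) ∪ Icc (t + a) (t + b) := by
    rintro x ⟨hax, hxb⟩
    rcases le_total (x - t) 0 with hxt | hxt
    · rw [abs_of_nonpos hxt] at hax hxb
      exact Or.inl ⟨by linarith, by linarith⟩
    · rw [abs_of_nonneg hxt] at hax hxb
      exact Or.inr ⟨by linarith, by linarith⟩
  calc volume {x : ℝ | |x - t| ∈ Icc a b}
      ≤ volume (Icc (t - b) (t - a)) + volume (Icc (t + a) (t + b)) :=
        (measure_mono hsub).trans (measure_union_le _ _)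
    _ = 2 * ENNReal.ofReal (b - a) := by
        rw [Real.volume_Icc, Real.volume_Icc, two_mul]
        congr 2 <;> ring

lemma Real.volume_setOf_sq_sub_mem_Icc_le (t d₁ d₂ : ℝ) :
    volume {x : ℝ | (x - t) ^ 2 ∈ Icc d₁ d₂} ≤ 2 * ENNReal.ofReal √(d₂ - d₁) := by
  have hsub : {x : ℝ | (x - t) ^ 2 ∈ Icc d₁ d₂} ⊆ {x : ℝ | |x - t| ∈ Icc √d₁ √d₂} := by
    rintro x ⟨h₁, h₂⟩
    rw [mem_ofPred_eq, ← Real.sqrt_sq_eq_abs]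
    exact ⟨Real.sqrt_le_sqrt h₁, Real.sqrt_le_sqrt h₂⟩
  refine (measure_mono hsub).trans ((Real.volume_setOf_abs_sub_mem_Icc_le t _ _).trans ?_)
  gcongr
  exact Real.sqrt_sub_sqrt_le_sqrt_sub d₁ d₂

lemma Real.volume_setOf_abs_sub_mul_sq_le (D c t B : ℝ) (hc : 0 < c) :
    volume {x : ℝ | |D - c * (x - t) ^ 2| ≤ B} ≤ 2 * ENNReal.ofReal √(2 * B / c) := by
  have hsub : {x : ℝ | |D - c * (x - t) ^ 2| ≤ B} ⊆
      {x : ℝ | (x - t) ^ 2 ∈ Icc ((D - B) / c) ((D + B) / c)} := by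
    intro x hx
    rw [mem_ofPred_eq, abs_le] at hx
    exact ⟨(div_le_iff₀ hc).mpr (by linarith), (le_div_iff₀ hc).mpr (by linarith)⟩
  refine (measure_mono hsub).trans ((Real.volume_setOf_sq_sub_mem_Icc_le t _ _).trans ?_)
  rw [← sub_div, show D + B - (D - B) = 2 * B by ring]

lemma Int.count_setOf_abs_sub_le (c r : ℝ) :
    Measure.count {n : ℤ | |(n : ℝ) - c| ≤ r} ≤ ENNReal.ofReal (2 * r + 1) := by
  have hset : {n : ℤ | |(n : ℝ) - c| ≤ r} = ↑(Finset.Icc ⌈c - r⌉ ⌊c + r⌋) := by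
    ext n
    simp only [mem_ofPred_eq, abs_sub_le_iff, Finset.coe_Icc, mem_Icc, Int.ceil_le, Int.le_floor]
    constructor <;> rintro ⟨h₁, h₂⟩ <;> constructor <;> linarith
  rw [hset, Measure.count_apply_finset, Int.card_Icc, ← ENNReal.ofReal_natCast]
  refine ENNReal.ofReal_le_ofReal_iff'.mpr ?_
  rcases le_or_gt (⌊c + r⌋ + 1 - ⌈c - r⌉) 0 with hz | hz
  · exact Or.inr (by simp [Int.toNat_of_nonpos hz])
  · left
    have hcast : ((⌊c + r⌋ + 1 - ⌈c - r⌉).toNat : ℝ) = ⌊c + r⌋ + 1 - ⌈c - r⌉ := by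
      exact_mod_cast Int.toNat_of_nonneg hz.le
    rw [hcast]
    linarith [Int.floor_le (c + r), Int.le_ceil (c - r)]

lemma MeasureTheory.Measure.prod_apply_le_mul_of_fiber_le {α β : Type*} [MeasurableSpace α]
    [MeasurableSpace β] {μ : Measure α} {ν : Measure β} {s : Set (α × β)} (hs : MeasurableSet s)
    {t : Set α} {N : ℝ≥0∞} (hst : ∀ p ∈ s, p.1 ∈ t) (hN : ∀ x ∈ t, ν (Prod.mk x ⁻¹' s) ≤ N) :
    μ.prod ν s ≤ N * μ t := by
  calc μ.prod ν s ≤ ∫⁻ x, ν (Prod.mk x ⁻¹' s) ∂μ := Measure.prod_apply_le hs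
    _ ≤ ∫⁻ x, t.indicator (fun _ => N) x ∂μ := lintegral_mono fun x => by
        by_cases hx : x ∈ t
        · simpa [hx] using hN x hx
        · have hfib : Prod.mk x ⁻¹' s = ∅ := eq_empty_of_forall_notMem fun y hy => hx (hst _ hy)
          simp [hx, hfib]
    _ ≤ N * μ t := lintegral_indicator_const_le t N

lemma mul_sub_div_le_min {x ξ : ℝ} (hx : 0 < x) (hxξ : 0 < ξ - x) :
    x * (ξ - x) / ξ ≤ min x (ξ - x) := by
  rw [div_le_iff₀ (by linarith)]
  rcases min_cases x (ξ - x) with ⟨h, -⟩ | ⟨h, -⟩ <;> rw [h] <;> nlinarith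

lemma abs_add_three_mul_le_and_abs_sub_le {c₀ K m A ξ x n q : ℝ} (hx : 0 < x)
    (hxξ : 0 < ξ - x) (hm : 0 < m) (hK : 0 ≤ K) (hmin : min x (ξ - x) ≤ 2 * m)
    (hjb : jb (A + 3 * ξ * x * (ξ - x) + (ξ * n - x * q) ^ 2 / (ξ * x * (ξ - x))) ≤ c₀ * K)
    (hv : |n / x - (q - n) / (ξ - x)| < √K / √m) :
    |A + 3 * ξ * x * (ξ - x)| ≤ (c₀ + 2) * K ∧ |n - x * q / ξ| ≤ 2 * √(K * m) := by
  set v := n / x - (q - n) / (ξ - x)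
  set w := x * (ξ - x) / ξ
  have hξ : 0 < ξ := by linarith
  have hw0 : 0 ≤ w := by positivity
  have hw : w ≤ 2 * m := (mul_sub_div_le_min hx hxξ).trans hmin
  have hn : n - x * q / ξ = w * v := by
    simp only [w, v]; field_simp; ring
  have hres : (ξ * n - x * q) ^ 2 / (ξ * x * (ξ - x)) = w * v ^ 2 := by
    simp only [w, v]; field_simp; ring
  have hv2 : v ^ 2 ≤ K / m := by
    have := sq_le_sq' (abs_lt.mp hv).1.le (abs_lt.mp hv).2.le
    rwa [div_pow, Real.sq_sqrt hK, Real.sq_sqrt hm.le] at this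
  constructor
  · have hres_le : w * v ^ 2 ≤ 2 * K :=
      calc w * v ^ 2 ≤ 2 * m * (K / m) := mul_le_mul hw hv2 (sq_nonneg _) (by positivity)
        _ = 2 * K := by field_simp
    have habs := (abs_le_jb _).trans hjb
    rw [hres, abs_le] at habs
    rw [abs_le]
    constructor <;> nlinarith [mul_nonneg hw0 (sq_nonneg v)]
  · rw [hn, abs_mul, abs_of_nonneg hw0]
    calc w * |v| ≤ 2 * m * (√K / √m) := mul_le_mul hw hv.le (abs_nonneg _) (by positivity)
      _ = 2 * √(K * m) := by
        rw [Real.sqrt_mul hK]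
        field_simp
        rw [Real.sq_sqrt hm.le, mul_comm]

lemma ofReal_mul_two_mul_ofReal_sqrt_le {c K m Mx ξ : ℝ} (hc : 0 ≤ c) (hK : 1 ≤ K) (hm : 1 ≤ m)
    (hMx : 0 < Mx) (hMxξ : Mx ≤ ξ) :
    ENNReal.ofReal (2 * (2 * √(K * m)) + 1) * (2 * ENNReal.ofReal √(2 * (c * K) / (3 * ξ))) ≤
      ENNReal.ofReal (10 * √c * K * √m / √Mx) := by
  have hξ : 0 < ξ := hMx.trans_le hMxξ
  have hsK : 1 ≤ √K := Real.one_le_sqrt.mpr hK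
  have hsm : 1 ≤ √m := Real.one_le_sqrt.mpr hm
  have hcount : 2 * (2 * √(K * m)) + 1 ≤ 5 * (√K * √m) := by
    rw [Real.sqrt_mul (by linarith)]
    nlinarith
  have hwidth : √(2 * (c * K) / (3 * ξ)) ≤ √c * √K / √Mx := by
    rw [← Real.sqrt_mul hc, ← Real.sqrt_div' _ hMx.le]
    refine Real.sqrt_le_sqrt ?_
    rw [div_le_div_iff₀ (by positivity) hMx]
    nlinarith [mul_nonneg hc (by linarith : (0 : ℝ) ≤ K)]
  rw [← ENNReal.ofReal_ofNat 2, ← ENNReal.ofReal_mul (by norm_num),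
    ← ENNReal.ofReal_mul (by positivity)]
  refine ENNReal.ofReal_le_ofReal ?_
  calc (2 * (2 * √(K * m)) + 1) * (2 * √(2 * (c * K) / (3 * ξ)))
      ≤ 5 * (√K * √m) * (2 * (√c * √K / √Mx)) := by gcongr
    _ = 10 * √c * (√K * √K) * √m / √Mx := by ring
    _ = 10 * √c * K * √m / √Mx := by rw [Real.mul_self_sqrt (by linarith)]

/-- size estimate for the region `B^{2,1}` (first part of Lemma 2.5). -/
theorem measure_B21_le (c₀ : ℝ) (hc₀ : 1 ≤ c₀) :
    ∃ C : ℝ, 0 < C ∧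
      ∀ (τ ξ : ℝ) (q : ℤ) (K₁ K₂ M₁ M₂ : ℝ) (I₁ I₂ : Set ℝ),
        0 < ξ → 1 ≤ K₁ → 1 ≤ K₂ → 1 ≤ M₁ → 1 ≤ M₂ →
        I₁.OrdConnected → I₂.OrdConnected →
        ((volume : Measure ℝ).prod Measure.count)
            {p : ℝ × ℤ | p.1 ∈ I₁ ∧ ξ - p.1 ∈ I₂ ∧
              M₁ ≤ p.1 ∧ p.1 ≤ 2 * M₁ ∧ M₂ ≤ ξ - p.1 ∧ ξ - p.1 ≤ 2 * M₂ ∧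
              jb (τ - ξ ^ 3 + (q : ℝ) ^ 2 / ξ + 3 * ξ * p.1 * (ξ - p.1) +
                  (ξ * (p.2 : ℝ) - p.1 * (q : ℝ)) ^ 2 /
                    (ξ * p.1 * (ξ - p.1))) ≤ c₀ * max K₁ K₂ ∧
              1 ≤ |(p.2 : ℝ) / p.1 - ((q : ℝ) - (p.2 : ℝ)) / (ξ - p.1)| ∧
              |(p.2 : ℝ) / p.1 - ((q : ℝ) - (p.2 : ℝ)) / (ξ - p.1)| <
                (max K₁ K₂) ^ ((1 : ℝ) / 2) / (min M₁ M₂) ^ ((1 : ℝ) / 2)} ≤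
          ENNReal.ofReal
            (C * (max K₁ K₂) * (min M₁ M₂) ^ ((1 : ℝ) / 2) /
              (max M₁ M₂) ^ ((1 : ℝ) / 2)) := by
  refine ⟨10 * √(c₀ + 2), by positivity, ?_⟩
  intro τ ξ q K₁ K₂ M₁ M₂ I₁ I₂ hξ hK₁ hK₂ hM₁ hM₂ _ _
  simp only [← Real.sqrt_eq_rpow]
  set K := max K₁ K₂
  set m := min M₁ M₂
  have hK : 1 ≤ K := hK₁.trans (le_max_left _ _)
  have hm : 1 ≤ m := le_min hM₁ hM₂
  rcases lt_or_ge ξ (M₁ + M₂) with hsmall | hlarge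
  · refine (measure_mono (t := ∅) fun p hp => ?_).trans (by simp)
    linarith [hp.2.2.1, hp.2.2.2.2.1]
  set A := τ - ξ ^ 3 + (q : ℝ) ^ 2 / ξ
  set S := {x : ℝ | |A + 3 * ξ * x * (ξ - x)| ≤ (c₀ + 2) * K}
  set E := {p : ℝ × ℤ | p.1 ∈ S ∧ |(p.2 : ℝ) - p.1 * q / ξ| ≤ 2 * √(K * m)}
  have hE : MeasurableSet E :=
    ((measurableSet_le (f := fun x : ℝ => |A + 3 * ξ * x * (ξ - x)|) (by fun_prop)
      measurable_const).preimage measurable_fst).inter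
      (measurableSet_le (f := fun p : ℝ × ℤ => |(p.2 : ℝ) - p.1 * q / ξ|) (by fun_prop)
        measurable_const)
  -- `3ξ x (ξ - x) = 3ξ³/4 - 3ξ (x - ξ/2)²`
  have hS : volume S ≤ 2 * ENNReal.ofReal √(2 * ((c₀ + 2) * K) / (3 * ξ)) := by
    convert Real.volume_setOf_abs_sub_mul_sq_le (A + 3 * ξ ^ 3 / 4) (3 * ξ) (ξ / 2)
      ((c₀ + 2) * K) (by positivity) using 4
    ring_nf
  calc _ ≤ ((volume : Measure ℝ).prod Measure.count) E := by
        refine measure_mono ?_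
        rintro ⟨x, n⟩ ⟨-, -, h₁, h₂, h₃, h₄, hjb, -, hv⟩
        refine abs_add_three_mul_le_and_abs_sub_le (by linarith) (by linarith) (by linarith)
          (by linarith) ((min_le_min h₂ h₄).trans_eq ?_) hjb hv
        exact (mul_min_of_nonneg _ _ zero_le_two).symm
    _ ≤ ENNReal.ofReal (2 * (2 * √(K * m)) + 1) * volume S :=
        Measure.prod_apply_le_mul_of_fiber_le hE (fun _ hp => hp.1) fun x _ =>
          (measure_mono fun _ hn => hn.2).trans (Int.count_setOf_abs_sub_le (x * q / ξ) _)
    _ ≤ _ := by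
        grw [hS]
        exact ofReal_mul_two_mul_ofReal_sqrt_le (by linarith) hK hm (by positivity)
          (max_le (by linarith) (by linarith))
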